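/- If the static dependency graph of a set of transaction templates contains no edge chain T_i -RW-> T_j -RW-> T_k (no two consecutive RW edges, including the case i = k), then any runtime dependency graph homomorphic to the static graph contains no SI dangerous structure, and hence every schedule under snapshot isolation is serializable. -/
import Mathlib


inductive Lbl | WW | WR | RW
deriving DecidableEq

/-- Two transactions are concurrent if neither commits before the other starts. -/
def Concurrent {V : Type*} (start commit : V → ℝ) (i j : V) : Prop :=
  ¬ commit i < start j ∧ ¬ commit j < start i

/-- If the static dependency graph over templates has no two consecutive RW
edges (including the case u = w), then any runtime dependency graph that maps
label-preservingly to the static graph contains no SI dangerous structure, and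
under snapshot-isolation semantics every schedule is serializable (the runtime
graph is acyclic). -/
theorem stmt_5 {Tmpl V : Type*}
    (S : Tmpl → Tmpl → Lbl → Prop)
    (hstatic : ∀ u v w : Tmpl, ¬ (S u v Lbl.RW ∧ S v w Lbl.RW))
    (tmpl : V → Tmpl) (E : V → V → Lbl → Prop)
    (hhom : ∀ i j l, E i j l → S (tmpl i) (tmpl j) l)
    (start commit : V → ℝ)
    (hsc : ∀ T, start T < commit T)
    (hinj : Function.Injective commit)
    (hOther : ∀ i j l, E i j l → l ≠ Lbl.RW → commit i < start j)
    (hRW : ∀ i j, E i j Lbl.RW → start i < commit j) :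
    (∀ a b c : V, ¬ (E a b Lbl.RW ∧ E b c Lbl.RW ∧
        Concurrent start commit a b ∧ Concurrent start commit b c)) ∧
    (∀ (n : ℕ), 0 < n → ∀ (f : ZMod n → V) (lbl : ZMod n → Lbl),
      (∀ i : ZMod n, E (f i) (f (i + 1)) (lbl i)) → False) := by
  have noRW2 : ∀ a b c : V, E a b Lbl.RW → E b c Lbl.RW → False := by
    intro a b c h1 h2
    exact hstatic _ _ _ ⟨hhom _ _ _ h1, hhom _ _ _ h2⟩
  constructor
  · rintro a b c ⟨h1, h2, -, -⟩
    exact noRW2 a b c h1 h2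
  · intro n hn f lbl hcyc
    set φ : ZMod n → ℝ := fun i =>
      if lbl i = Lbl.RW then start (f i) else commit (f i) with hφ
    have step : ∀ i : ZMod n, φ i < φ (i + 1) := by
      intro i
      by_cases h : lbl i = Lbl.RW
      · have hE : E (f i) (f (i + 1)) Lbl.RW := h ▸ hcyc i
        have hnext : lbl (i + 1) ≠ Lbl.RW := by
          intro h'
          exact noRW2 _ _ _ hE (h' ▸ hcyc (i + 1))
        have := hRW _ _ hE
        simp only [hφ, h, hnext, if_true, if_false, if_neg hnext]
        linarith
      · have h1 := hOther _ _ _ (hcyc i) h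
        have h2 : start (f (i + 1)) ≤ φ (i + 1) := by
          by_cases h' : lbl (i + 1) = Lbl.RW
          · simp [hφ, h']
          · simp only [hφ, if_neg h']
            exact le_of_lt (hsc _)
        simp only [hφ, if_neg h]
        linarith
    have mono : ∀ k : ℕ, φ 0 < φ ((k : ZMod n) + 1) := by
      intro k
      induction k with
      | zero => simpa using step 0
      | succ k ih =>
        have := step ((k : ZMod n) + 1)
        push_cast
        linarith
    obtain ⟨m, rfl⟩ : ∃ m, n = m + 1 := ⟨n - 1, (Nat.succ_pred_eq_of_pos hn).symm⟩
    have hlast := mono m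
    have : ((m : ZMod (m + 1)) + 1) = 0 := by
      have : (((m + 1 : ℕ)) : ZMod (m + 1)) = 0 := ZMod.natCast_self _
      push_cast at this
      exact this
    rw [this] at hlast
    exact lt_irrefl _ hlast
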